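/- (Energy balance for multiply coupled circuit DAEs.) Let N ≥ 2 and for each i ∈ {1,…,N} let A_{C_i}, A_{R_i}, A_{L_i}, A_{V_i}, A_{I_i} and A_{λ_i} ∈ ℝ^{n_i×n_λ} be real matrices (the last being the incidence matrix of the n_λ coupling branches in subcircuit i). Let q_i, φ_i be bijections with differentiable potentials V_{C_i}, V_{L_i} satisfying ∇V_{C_i} = q_i⁻¹ and ∇V_{L_i} = φ_i⁻¹, and let g_i be continuous with ⟪g_i(u), u⟫ ≥ 0 for all u. Let i_{s,i}, v_{s,i} be continuous source functions on [t₀,t₁], and suppose differentiable functions e_i, j_{L_i}, j_{V_i} and a continuous function λ : [t₀,t₁] → ℝ^{n_λ} satisfy for all t and all i: A_{C_i} d/dt q_i(A_{C_i}ᵀ e_i) + A_{R_i} g_i(A_{R_i}ᵀ e_i) + A_{L_i} j_{L_i} + A_{V_i} j_{V_i} + A_{I_i} i_{s,i}(t) + A_{λ_i} λ(t) = 0; d/dt φ_i(j_{L_i}) = A_{L_i}ᵀ e_i; A_{V_i}ᵀ e_i = v_{s,i}(t); together with the coupling condition Σ_{i=1}^N A_{λ_i}ᵀ e_i(t) = 0.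 Then the total Hamiltonian H(t) := Σ_i ( V_{C_i}(q_i(A_{C_i}ᵀ e_i(t))) + V_{L_i}(φ_i(j_{L_i}(t))) ) satisfies H(t₁) − H(t₀) ≤ ∫_{t₀}^{t₁} Σ_{i=1}^N ( −i_{s,i}(t)ᵀ A_{I_i}ᵀ e_i(t) − v_{s,i}(t)ᵀ j_{V_i}(t) ) dt. -/

import Mathlib

open Matrix MeasureTheory

/-!
Pairing Kirchhoff's current law of subcircuit `i` with its node potentials `e i` (Tellegen's
theorem) splits the power absorbed by its capacitors and inductors into resistive dissipation,
the power delivered by its sources, and the power `λᵀ A_{λ_i}ᵀ e_i` leaving through the coupling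
branches. Since `∇V_C = q⁻¹` and `∇V_L = φ⁻¹`, the absorbed power is the time derivative of the
stored energy. Summed over the subcircuits the coupling powers cancel because
`Σᵢ A_{λ_i}ᵀ e_i = 0`, and the resistors are passive, so `dH/dt` is bounded by the supplied
power; integrating this bound gives the claim.
-/

section Continuity

variable {X R m n : Type*} [TopologicalSpace X] [TopologicalSpace R] {s : Set X}

@[fun_prop]
theorem ContinuousOn.dotProduct [Fintype n] [Mul R] [AddCommMonoid R] [ContinuousAdd R]
    [ContinuousMul R] {A B : X → n → R} (hA : ContinuousOn A s) (hB : ContinuousOn B s) :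
    ContinuousOn (fun x => A x ⬝ᵥ B x) s :=
  (continuous_fst.dotProduct continuous_snd).comp_continuousOn (hA.prodMk hB)

@[fun_prop]
theorem ContinuousOn.matrix_mulVec [NonUnitalNonAssocSemiring R] [ContinuousAdd R]
    [ContinuousMul R] [Fintype n] (M : Matrix m n R) {B : X → n → R} (hB : ContinuousOn B s) :
    ContinuousOn (fun x => M *ᵥ B x) s :=
  (continuous_const.matrix_mulVec continuous_id).comp_continuousOn hB

end Continuity

theorem power_balance_of_kcl {R ν c r l v i k : Type*} [CommRing R] [Fintype ν] [Fintype c]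
    [Fintype r] [Fintype l] [Fintype v] [Fintype i] [Fintype k]
    (AC : Matrix ν c R) (AR : Matrix ν r R) (AL : Matrix ν l R) (AV : Matrix ν v R)
    (AI : Matrix ν i R) (Alam : Matrix ν k R) {e : ν → R} {qC : c → R} {jR : r → R}
    {jL uL : l → R} {jV vs : v → R} {is : i → R} {lam : k → R}
    (hKCL : AC *ᵥ qC + AR *ᵥ jR + AL *ᵥ jL + AV *ᵥ jV + AI *ᵥ is + Alam *ᵥ lam = 0)
    (hL : uL = ALᵀ *ᵥ e) (hV : AVᵀ *ᵥ e = vs) :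
    ACᵀ *ᵥ e ⬝ᵥ qC + jL ⬝ᵥ uL =
      -(jR ⬝ᵥ ARᵀ *ᵥ e) - is ⬝ᵥ AIᵀ *ᵥ e - vs ⬝ᵥ jV - lam ⬝ᵥ Alamᵀ *ᵥ e := by
  have hpower := congrArg (e ⬝ᵥ ·) hKCL
  simp only [dotProduct_add, dotProduct_zero] at hpower
  rw [hL, ← hV, dotProduct_comm (ACᵀ *ᵥ e), dotProduct_comm (AVᵀ *ᵥ e)]
  simp only [dotProduct_transpose_mulVec]
  linear_combination hpower

theorem hasDerivAt_potential_comp {κ : Type*} [Fintype κ] {q : (κ → ℝ) → κ → ℝ}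
    (hq : q.Injective) {V : (κ → ℝ) → ℝ} (hV : Differentiable ℝ V)
    (hgrad : ∀ y z, fderiv ℝ V y z = Function.invFun q y ⬝ᵥ z) {x : ℝ → κ → ℝ} {w : κ → ℝ}
    {t : ℝ} (hw : HasDerivAt (fun s => q (x s)) w t) :
    HasDerivAt (fun s => V (q (x s))) (x t ⬝ᵥ w) t := by
  have hchain := (hV (q (x t))).hasFDerivAt.comp_hasDerivAt t hw
  rwa [hgrad, Function.leftInverse_invFun hq] at hchain

theorem coupled_circuits_energy_balance_general {N : ℕ}
    (n nC nR nL nV nI : Fin N → ℕ) (nlam : ℕ)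
    (AC : ∀ i, Matrix (Fin (n i)) (Fin (nC i)) ℝ)
    (AR : ∀ i, Matrix (Fin (n i)) (Fin (nR i)) ℝ)
    (AL : ∀ i, Matrix (Fin (n i)) (Fin (nL i)) ℝ)
    (AV : ∀ i, Matrix (Fin (n i)) (Fin (nV i)) ℝ)
    (AI : ∀ i, Matrix (Fin (n i)) (Fin (nI i)) ℝ)
    (Alam : ∀ i, Matrix (Fin (n i)) (Fin nlam) ℝ)
    (q : ∀ i, (Fin (nC i) → ℝ) → (Fin (nC i) → ℝ))
    (φ : ∀ i, (Fin (nL i) → ℝ) → (Fin (nL i) → ℝ))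
    (hq : ∀ i, Function.Bijective (q i)) (hφ : ∀ i, Function.Bijective (φ i))
    (VC : ∀ i, (Fin (nC i) → ℝ) → ℝ) (VL : ∀ i, (Fin (nL i) → ℝ) → ℝ)
    (hVC : ∀ i, Differentiable ℝ (VC i)) (hVL : ∀ i, Differentiable ℝ (VL i))
    (hVCgrad : ∀ i qc w, fderiv ℝ (VC i) qc w = Function.invFun (q i) qc ⬝ᵥ w)
    (hVLgrad : ∀ i φl w, fderiv ℝ (VL i) φl w = Function.invFun (φ i) φl ⬝ᵥ w)
    (g : ∀ i, (Fin (nR i) → ℝ) → (Fin (nR i) → ℝ))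
    (hgacc : ∀ i u, 0 ≤ g i u ⬝ᵥ u)
    (t₀ t₁ : ℝ) (ht : t₀ ≤ t₁)
    (is : ∀ i, ℝ → Fin (nI i) → ℝ) (vs : ∀ i, ℝ → Fin (nV i) → ℝ)
    (his : ∀ i, ContinuousOn (is i) (Set.Icc t₀ t₁))
    (hvs : ∀ i, ContinuousOn (vs i) (Set.Icc t₀ t₁))
    (e : ∀ i, ℝ → Fin (n i) → ℝ) (jL : ∀ i, ℝ → Fin (nL i) → ℝ)
    (jV : ∀ i, ℝ → Fin (nV i) → ℝ) (lam : ℝ → Fin nlam → ℝ)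
    (he : ∀ i, ∀ t ∈ Set.Icc t₀ t₁, DifferentiableAt ℝ (e i) t)
    (hjV : ∀ i, ∀ t ∈ Set.Icc t₀ t₁, DifferentiableAt ℝ (jV i) t)
    (w : ∀ i, ℝ → Fin (nC i) → ℝ) (v : ∀ i, ℝ → Fin (nL i) → ℝ)
    (hw : ∀ i, ∀ t ∈ Set.Icc t₀ t₁,
      HasDerivAt (fun s => q i ((AC i).transpose.mulVec (e i s))) (w i t) t)
    (hv : ∀ i, ∀ t ∈ Set.Icc t₀ t₁,
      HasDerivAt (fun s => φ i (jL i s)) (v i t) t)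
    (hKCL : ∀ i, ∀ t ∈ Set.Icc t₀ t₁,
      (AC i).mulVec (w i t) + (AR i).mulVec (g i ((AR i).transpose.mulVec (e i t))) +
        (AL i).mulVec (jL i t) + (AV i).mulVec (jV i t) + (AI i).mulVec (is i t) +
        (Alam i).mulVec (lam t) = 0)
    (hflux : ∀ i, ∀ t ∈ Set.Icc t₀ t₁, v i t = (AL i).transpose.mulVec (e i t))
    (hvolt : ∀ i, ∀ t ∈ Set.Icc t₀ t₁, (AV i).transpose.mulVec (e i t) = vs i t)
    (hcouple : ∀ t ∈ Set.Icc t₀ t₁, ∑ i, (Alam i).transpose.mulVec (e i t) = 0) :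
    (∑ i, (VC i (q i ((AC i).transpose.mulVec (e i t₁))) + VL i (φ i (jL i t₁)))) -
      (∑ i, (VC i (q i ((AC i).transpose.mulVec (e i t₀))) + VL i (φ i (jL i t₀)))) ≤
      ∫ t in t₀..t₁, ∑ i,
        (-(is i t ⬝ᵥ (AI i).transpose.mulVec (e i t)) - vs i t ⬝ᵥ jV i t) := by
  have hH : ∀ t ∈ Set.Icc t₀ t₁, HasDerivAt
      (fun s => ∑ i, (VC i (q i ((AC i)ᵀ *ᵥ e i s)) + VL i (φ i (jL i s))))
      (∑ i, ((AC i)ᵀ *ᵥ e i t ⬝ᵥ w i t + jL i t ⬝ᵥ v i t)) t := fun t ht =>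
    HasDerivAt.fun_sum fun i _ =>
      (hasDerivAt_potential_comp (hq i).1 (hVC i) (hVCgrad i) (hw i t ht)).add
        (hasDerivAt_potential_comp (hφ i).1 (hVL i) (hVLgrad i) (hv i t ht))
  have hpower : ∀ t ∈ Set.Icc t₀ t₁, ∑ i, ((AC i)ᵀ *ᵥ e i t ⬝ᵥ w i t + jL i t ⬝ᵥ v i t) ≤
      ∑ i, (-(is i t ⬝ᵥ (AI i)ᵀ *ᵥ e i t) - vs i t ⬝ᵥ jV i t) := by
    intro t ht
    have hcoupling : ∑ i, lam t ⬝ᵥ (Alam i)ᵀ *ᵥ e i t = 0 := by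
      rw [← dotProduct_sum, hcouple t ht, dotProduct_zero]
    calc _ ≤ ∑ i, (-(is i t ⬝ᵥ (AI i)ᵀ *ᵥ e i t) - vs i t ⬝ᵥ jV i t
          - lam t ⬝ᵥ (Alam i)ᵀ *ᵥ e i t) := by
          refine Finset.sum_le_sum fun i _ => ?_
          linarith [power_balance_of_kcl _ _ _ _ _ _ (hKCL i t ht) (hflux i t ht) (hvolt i t ht),
            hgacc i ((AR i)ᵀ *ᵥ e i t)]
      _ = _ := by rw [Finset.sum_sub_distrib, hcoupling, sub_zero]
  have he_cont : ∀ i, ContinuousOn (e i) (Set.Icc t₀ t₁) := fun i =>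
    continuousOn_of_forall_continuousAt fun t ht => (he i t ht).continuousAt
  have hjV_cont : ∀ i, ContinuousOn (jV i) (Set.Icc t₀ t₁) := fun i =>
    continuousOn_of_forall_continuousAt fun t ht => (hjV i t ht).continuousAt
  have hsupply_cont : ContinuousOn
      (fun t => ∑ i, (-(is i t ⬝ᵥ (AI i)ᵀ *ᵥ e i t) - vs i t ⬝ᵥ jV i t)) (Set.Icc t₀ t₁) := by
    fun_prop (disch := first | exact his _ | exact hvs _ | exact he_cont _ | exact hjV_cont _)
  exact intervalIntegral.sub_le_integral_of_hasDeriv_right_of_le ht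
    (HasDerivAt.continuousOn hH)
    (fun t ht => (hH t (Set.Ioo_subset_Icc_self ht)).hasDerivWithinAt)
    hsupply_cont.integrableOn_Icc (fun t ht => hpower t (Set.Ioo_subset_Icc_self ht))

/-- Energy balance for `N ≥ 2` circuit DAEs coupled through `n_λ` coupling
branches with common coupling current `λ`: the total Hamiltonian
`H = Σᵢ (V_{C_i}(q_i(A_{C_i}ᵀ e_i)) + V_{L_i}(φ_i(j_{L_i})))` satisfies
`H(t₁) − H(t₀) ≤ ∫ Σᵢ (−i_{s,i}ᵀ A_{I_i}ᵀ e_i − v_{s,i}ᵀ j_{V_i})`. -/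
theorem coupled_circuits_energy_balance {N : ℕ} (hN : 2 ≤ N)
    (n nC nR nL nV nI : Fin N → ℕ) (nlam : ℕ)
    (AC : ∀ i, Matrix (Fin (n i)) (Fin (nC i)) ℝ)
    (AR : ∀ i, Matrix (Fin (n i)) (Fin (nR i)) ℝ)
    (AL : ∀ i, Matrix (Fin (n i)) (Fin (nL i)) ℝ)
    (AV : ∀ i, Matrix (Fin (n i)) (Fin (nV i)) ℝ)
    (AI : ∀ i, Matrix (Fin (n i)) (Fin (nI i)) ℝ)
    (Alam : ∀ i, Matrix (Fin (n i)) (Fin nlam) ℝ)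
    (q : ∀ i, (Fin (nC i) → ℝ) → (Fin (nC i) → ℝ))
    (φ : ∀ i, (Fin (nL i) → ℝ) → (Fin (nL i) → ℝ))
    (hq : ∀ i, Function.Bijective (q i)) (hφ : ∀ i, Function.Bijective (φ i))
    (VC : ∀ i, (Fin (nC i) → ℝ) → ℝ) (VL : ∀ i, (Fin (nL i) → ℝ) → ℝ)
    (hVC : ∀ i, Differentiable ℝ (VC i)) (hVL : ∀ i, Differentiable ℝ (VL i))
    (hVCgrad : ∀ i qc w, fderiv ℝ (VC i) qc w = Function.invFun (q i) qc ⬝ᵥ w)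
    (hVLgrad : ∀ i φl w, fderiv ℝ (VL i) φl w = Function.invFun (φ i) φl ⬝ᵥ w)
    (g : ∀ i, (Fin (nR i) → ℝ) → (Fin (nR i) → ℝ))
    (hg : ∀ i, Continuous (g i)) (hgacc : ∀ i u, 0 ≤ g i u ⬝ᵥ u)
    (t₀ t₁ : ℝ) (ht : t₀ ≤ t₁)
    (is : ∀ i, ℝ → Fin (nI i) → ℝ) (vs : ∀ i, ℝ → Fin (nV i) → ℝ)
    (his : ∀ i, ContinuousOn (is i) (Set.Icc t₀ t₁))
    (hvs : ∀ i, ContinuousOn (vs i) (Set.Icc t₀ t₁))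
    (e : ∀ i, ℝ → Fin (n i) → ℝ) (jL : ∀ i, ℝ → Fin (nL i) → ℝ)
    (jV : ∀ i, ℝ → Fin (nV i) → ℝ) (lam : ℝ → Fin nlam → ℝ)
    (he : ∀ i, ∀ t ∈ Set.Icc t₀ t₁, DifferentiableAt ℝ (e i) t)
    (hjL : ∀ i, ∀ t ∈ Set.Icc t₀ t₁, DifferentiableAt ℝ (jL i) t)
    (hjV : ∀ i, ∀ t ∈ Set.Icc t₀ t₁, DifferentiableAt ℝ (jV i) t)
    (hlam : ContinuousOn lam (Set.Icc t₀ t₁))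
    (w : ∀ i, ℝ → Fin (nC i) → ℝ) (v : ∀ i, ℝ → Fin (nL i) → ℝ)
    (hw : ∀ i, ∀ t ∈ Set.Icc t₀ t₁,
      HasDerivAt (fun s => q i ((AC i).transpose.mulVec (e i s))) (w i t) t)
    (hv : ∀ i, ∀ t ∈ Set.Icc t₀ t₁,
      HasDerivAt (fun s => φ i (jL i s)) (v i t) t)
    (hKCL : ∀ i, ∀ t ∈ Set.Icc t₀ t₁,
      (AC i).mulVec (w i t) + (AR i).mulVec (g i ((AR i).transpose.mulVec (e i t))) +
        (AL i).mulVec (jL i t) + (AV i).mulVec (jV i t) + (AI i).mulVec (is i t) +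
        (Alam i).mulVec (lam t) = 0)
    (hflux : ∀ i, ∀ t ∈ Set.Icc t₀ t₁, v i t = (AL i).transpose.mulVec (e i t))
    (hvolt : ∀ i, ∀ t ∈ Set.Icc t₀ t₁, (AV i).transpose.mulVec (e i t) = vs i t)
    (hcouple : ∀ t ∈ Set.Icc t₀ t₁, ∑ i, (Alam i).transpose.mulVec (e i t) = 0) :
    (∑ i, (VC i (q i ((AC i).transpose.mulVec (e i t₁))) + VL i (φ i (jL i t₁)))) -
      (∑ i, (VC i (q i ((AC i).transpose.mulVec (e i t₀))) + VL i (φ i (jL i t₀)))) ≤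
      ∫ t in t₀..t₁, ∑ i,
        (-(is i t ⬝ᵥ (AI i).transpose.mulVec (e i t)) - vs i t ⬝ᵥ jV i t) :=
  coupled_circuits_energy_balance_general n nC nR nL nV nI nlam AC AR AL AV AI Alam q φ hq hφ VC VL
    hVC hVL hVCgrad hVLgrad g hgacc t₀ t₁ ht is vs his hvs e jL jV lam he hjV w v hw hv hKCL hflux
    hvolt hcouple
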